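/- arXiv:2305.19394 — 2 statements merged into one kernel-verified Lean document; each statement's English description precedes it below -/
import Mathlib

section
/- Under the Setup with weak-correlation constant c, assume additionally that h₁(D) > 0 and h₂(D) are finite, that g > 0 so that H^D is positive definite, and that X^D H^D (X^D)ᵀ is almost surely invertible. Let A = (1/(D·h₁(D)))·X^D H^D (X^D)ᵀ. Then for every p ∈ (0,1) and all N, D large enough that 8·sqrt((N⁴/D)·((c+1)/p)·(1 + h₂(D)/h₁(D)²)) ≤ 4, the operator-norm bound ‖A^{−1} − I_N‖₂ ≤ 8·sqrt((N⁴/D)·((c+1)/p)·(1 + h₂(D)/h₁(D)²)) holds with probability at least 1 − p. -/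
open MeasureTheory ProbabilityTheory Filter Matrix

noncomputable section

variable {Ω : Type*} [MeasurableSpace Ω]

/-- The `i`-th entry of the label difference vector `y_D − y⁰_D`, where
`(y_D)ᵢ = (1/√D) Σ_{d<D} Xⁱ_d W*_d` and `(y⁰_D)ᵢ = (1/√D) Σ_{d<D} Xⁱ_d W⁰_d`. -/
def ydiff (X : ℕ → ℕ → Ω → ℝ) (Wstar W0 : ℕ → Ω → ℝ) (D i : ℕ) (ω : Ω) : ℝ :=
  (Real.sqrt D)⁻¹ * ∑ d ∈ Finset.range D, X i d ω * (Wstar d ω - W0 d ω)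

/-- The `N × D` random input matrix `X^D` whose `i`-th row is the sample `Xⁱ`. -/
def inputMatrix (X : ℕ → ℕ → Ω → ℝ) (N D : ℕ) (ω : Ω) : Matrix (Fin N) (Fin D) ℝ :=
  Matrix.of fun i d => X i.val d.val ω

/-- The diagonal matrix `H^D` with entries `h_dd = g(W⁰_d / √D)`. -/
def hessMatrix (g : ℝ → ℝ) (W0 : ℕ → Ω → ℝ) (D : ℕ) (ω : Ω) : Matrix (Fin D) (Fin D) ℝ :=
  Matrix.diagonal fun d : Fin D => g (W0 d.val ω / Real.sqrt D)

/-- `h₁(D) = E[g(W⁰_d / √D)]`. -/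
def hMean (μ : Measure Ω) (g : ℝ → ℝ) (W0 : ℕ → Ω → ℝ) (D : ℕ) : ℝ :=
  ∫ ω, g (W0 0 ω / Real.sqrt D) ∂μ

/-- `h₂(D) = Var(g(W⁰_d / √D))`. -/
def hVar (μ : Measure Ω) (g : ℝ → ℝ) (W0 : ℕ → Ω → ℝ) (D : ℕ) : ℝ :=
  variance (fun ω => g (W0 0 ω / Real.sqrt D)) μ

/-- The operator (spectral) norm of a square real matrix. -/
def matOpNorm {n : ℕ} (M : Matrix (Fin n) (Fin n) ℝ) : ℝ :=
  ‖Matrix.toEuclideanCLM (𝕜 := ℝ) M‖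

/-- The scaled Gram matrix `A = (1/(D h₁(D))) X^D H^D (X^D)ᵀ`. -/
def scaledGram (μ : Measure Ω) (X : ℕ → ℕ → Ω → ℝ) (g : ℝ → ℝ) (W0 : ℕ → Ω → ℝ)
    (N D : ℕ) (ω : Ω) : Matrix (Fin N) (Fin N) ℝ :=
  ((D : ℝ) * hMean μ g W0 D)⁻¹ •
    (inputMatrix X N D ω * hessMatrix g W0 D ω * (inputMatrix X N D ω)ᵀ)

section AuxLemmas
open ENNReal

lemma matOpNorm_le_sqrt {n : ℕ} (M : Matrix (Fin n) (Fin n) ℝ) :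
    matOpNorm M ≤ Real.sqrt (∑ i, ∑ j, (M i j)^2) := by
  refine ContinuousLinearMap.opNorm_le_bound _ (Real.sqrt_nonneg _) (fun x => ?_)
  have happ : ∀ i, (Matrix.toEuclideanCLM (𝕜 := ℝ) M) x i = ∑ j, M i j * x j := fun i => rfl
  have hnx : ‖x‖ = Real.sqrt (∑ j, (x j)^2) := by
    rw [EuclideanSpace.norm_eq]
    congr 1
    exact Finset.sum_congr rfl fun j _ => by rw [Real.norm_eq_abs, sq_abs]
  have hny : ‖(Matrix.toEuclideanCLM (𝕜 := ℝ) M) x‖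
      = Real.sqrt (∑ i, (∑ j, M i j * x j)^2) := by
    rw [EuclideanSpace.norm_eq]
    congr 1
    exact Finset.sum_congr rfl fun i _ => by rw [Real.norm_eq_abs, sq_abs, happ]
  rw [hny, hnx, ← Real.sqrt_mul (by positivity)]
  apply Real.sqrt_le_sqrt
  rw [Finset.sum_mul]
  apply Finset.sum_le_sum
  intro i _
  exact Finset.sum_mul_sq_le_sq_mul_sq _ _ _

lemma unit_inv_close {R : Type*} [NormedRing R] [CompleteSpace R]
    (hone : ‖(1:R)‖ ≤ 1) (a : R) (h : ‖1 - a‖ ≤ 1/2) :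
    ∃ u : Rˣ, (u:R) = a ∧ ‖(↑u⁻¹ : R) - 1‖ ≤ 2 * ‖1 - a‖ := by
  have hlt : ‖1 - a‖ < 1 := lt_of_le_of_lt h (by norm_num)
  refine ⟨Units.oneSub (1 - a) hlt, by simp, ?_⟩
  set u := Units.oneSub (1 - a) hlt with hu
  have hval : (u : R) = a := by simp [hu]
  have hinv : (↑u⁻¹ : R) * a = 1 := by rw [← hval]; exact u.inv_mul
  have hkey : (↑u⁻¹ : R) - 1 = (↑u⁻¹ : R) * (1 - a) := by
    rw [mul_sub, hinv, mul_one]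
  have hb : ‖(↑u⁻¹ : R)‖ ≤ 2 := by
    have h1 : ‖(↑u⁻¹ : R)‖ ≤ 1 + ‖(↑u⁻¹ : R)‖ * (1/2) := by
      calc ‖(↑u⁻¹ : R)‖ = ‖1 + ((↑u⁻¹ : R) - 1)‖ := by congr 1; abel
        _ ≤ ‖(1:R)‖ + ‖(↑u⁻¹ : R) - 1‖ := norm_add_le _ _
        _ ≤ 1 + ‖(↑u⁻¹ : R)‖ * ‖1 - a‖ :=
            add_le_add hone (by rw [hkey]; exact norm_mul_le _ _)
        _ ≤ 1 + ‖(↑u⁻¹ : R)‖ * (1/2) :=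
            add_le_add le_rfl (mul_le_mul_of_nonneg_left h (norm_nonneg _))
    linarith
  calc ‖(↑u⁻¹ : R) - 1‖ ≤ ‖(↑u⁻¹ : R)‖ * ‖1 - a‖ := hkey ▸ norm_mul_le _ _
    _ ≤ 2 * ‖1 - a‖ := mul_le_mul_of_nonneg_right hb (norm_nonneg _)

lemma matrix_inv_close {n : ℕ} (M : Matrix (Fin n) (Fin n) ℝ) (ε : ℝ) (hε : ε ≤ 1/2)
    (h : matOpNorm (M - 1) ≤ ε) : matOpNorm (M⁻¹ - 1) ≤ 2 * ε := by
  set e := Matrix.toEuclideanCLM (n := Fin n) (𝕜 := ℝ) with he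
  have hsub : ‖1 - e M‖ = matOpNorm (M - 1) := by
    rw [show (1 : EuclideanSpace ℝ (Fin n) →L[ℝ] EuclideanSpace ℝ (Fin n)) - e M
      = - (e (M - 1)) by rw [_root_.map_sub, _root_.map_one, neg_sub], norm_neg]
    rfl
  have h2 : ‖1 - e M‖ ≤ 1/2 := by rw [hsub]; exact h.trans hε
  obtain ⟨u, huval, hub⟩ := unit_inv_close ContinuousLinearMap.norm_id_le (e M) h2
  have hunit : IsUnit M := by
    have h3 : IsUnit (e M) := huval ▸ u.isUnit
    have h4 := h3.map e.symm
    simpa using h4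
  have hMinv : M⁻¹ * M = 1 :=
    Matrix.nonsing_inv_mul M ((Matrix.isUnit_iff_isUnit_det M).mp hunit)
  have h5 : e M⁻¹ * (u : _) = 1 := by rw [huval, ← _root_.map_mul, hMinv, _root_.map_one]
  have h6 : e M⁻¹ = ((u⁻¹ : _ˣ) : _) := (Units.inv_eq_of_mul_eq_one_left h5).symm
  have h7 : matOpNorm (M⁻¹ - 1) = ‖e M⁻¹ - 1‖ := by
    rw [show e M⁻¹ - 1 = e (M⁻¹ - 1) by rw [_root_.map_sub, _root_.map_one]]
    rfl
  rw [h7, h6]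
  exact hub.trans (by rw [hsub]; linarith)


lemma aux_quarter : (1:ℝ≥0∞)/2 = 1/4 + 1/4 := by
  simp only [one_div]
  rw [show (4:ℝ≥0∞) = 2*2 by norm_num, ← two_mul,
    ENNReal.mul_inv (by norm_num) (by norm_num), ← mul_assoc,
    ENNReal.mul_inv_cancel (by norm_num) (by norm_num), one_mul]

lemma aux_half : (1:ℝ≥0∞)/1 = 1/2 + 1/2 := by
  simp only [one_div, inv_one]; exact ENNReal.inv_two_add_inv_two.symm

lemma memL2_mul (μ : Measure Ω) (f φ : Ω → ℝ) (hf : MemLp f 4 μ) (hφ : MemLp φ 4 μ) :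
    MemLp (fun ω => φ ω * f ω) 2 μ := hf.smul hφ (hpqr := (⟨by simpa only [one_div] using aux_quarter.symm⟩ :
      ENNReal.HolderTriple 4 4 2))

lemma int_mul (μ : Measure Ω) (f φ : Ω → ℝ) (hf : MemLp f 2 μ) (hφ : MemLp φ 2 μ) :
    Integrable (fun ω => φ ω * f ω) μ := memLp_one_iff_integrable.mp (hf.smul hφ (hpqr := (⟨by simpa only [one_div, inv_one] using aux_half.symm⟩ :
      ENNReal.HolderTriple 2 2 1)))

lemma XW_factor (μ : Measure Ω) [IsProbabilityMeasure μ] (X : ℕ → ℕ → Ω → ℝ) (W0 : ℕ → Ω → ℝ)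
    (hW0X : IndepFun (fun ω d => W0 d ω) (fun ω (q : ℕ × ℕ) => X q.1 q.2 ω) μ)
    (F : (ℕ × ℕ → ℝ) → ℝ) (G : (ℕ → ℝ) → ℝ) (hF : Measurable F) (hG : Measurable G)
    (hiF : Integrable (fun ω => F (fun q => X q.1 q.2 ω)) μ)
    (hiG : Integrable (fun ω => G (fun d => W0 d ω)) μ) :
    Integrable (fun ω => F (fun q => X q.1 q.2 ω) * G (fun d => W0 d ω)) μ ∧
    ∫ ω, F (fun q => X q.1 q.2 ω) * G (fun d => W0 d ω) ∂μ =
      (∫ ω, F (fun q => X q.1 q.2 ω) ∂μ) * ∫ ω, G (fun d => W0 d ω) ∂μ :=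
  ⟨(hW0X.symm.comp hF hG).integrable_mul hiF hiG,
   (hW0X.symm.comp hF hG).integral_fun_mul_eq_mul_integral hiF.aestronglyMeasurable
     hiG.aestronglyMeasurable⟩

lemma entry_moment (μ : Measure Ω) [IsProbabilityMeasure μ]
    (X : ℕ → ℕ → Ω → ℝ)
    (hXmeas : ∀ i d, Measurable (X i d))
    (hXindep : iIndepFun (fun i ω d => X i d ω) μ)
    (hXident : ∀ i, IdentDistrib (fun ω d => X i d ω) (fun ω d => X 0 d ω) μ μ)
    (hXmean : ∀ i d, ∫ ω, X i d ω ∂μ = 0)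
    (hXvar : ∀ i d, ∫ ω, (X i d ω) ^ 2 ∂μ = 1)
    (hXL4 : ∀ i d, MemLp (X i d) 4 μ)
    (W0 : ℕ → Ω → ℝ) (hW0meas : ∀ d, Measurable (W0 d))
    (hW0indep : iIndepFun W0 μ)
    (hW0ident : ∀ d, IdentDistrib (W0 d) (W0 0) μ μ)
    (hW0X : IndepFun (fun ω d => W0 d ω) (fun ω (q : ℕ × ℕ) => X q.1 q.2 ω) μ)
    (c : ℝ)
    (hsum1 : ∀ d, Summable fun d' => (∫ ω, X 0 d ω * X 0 d' ω ∂μ) ^ 2)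
    (hcorr1 : ∀ d, (∑' d' : ℕ, (∫ ω, X 0 d ω * X 0 d' ω ∂μ) ^ 2) ≤ c)
    (hsum2 : ∀ d, Summable fun d' => |∫ ω, (X 0 d ω) ^ 2 * (X 0 d' ω) ^ 2 ∂μ -
      (∫ ω, (X 0 d ω) ^ 2 ∂μ) * ∫ ω, (X 0 d' ω) ^ 2 ∂μ|)
    (hcorr2 : ∀ d, (∑' d' : ℕ, |∫ ω, (X 0 d ω) ^ 2 * (X 0 d' ω) ^ 2 ∂μ -
      (∫ ω, (X 0 d ω) ^ 2 ∂μ) * ∫ ω, (X 0 d' ω) ^ 2 ∂μ|) ≤ c)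
    (g : ℝ → ℝ) (hg : Measurable g) (D : ℕ)
    (hgL2D : MemLp (fun ω => g (W0 0 ω / Real.sqrt D)) 2 μ)
    (a b : ℕ) :
    Integrable (fun ω => (∑ d ∈ Finset.range D, X a d ω * X b d ω * g (W0 d ω / Real.sqrt D)
        - (if a = b then (1:ℝ) else 0) * (D * hMean μ g W0 D))^2) μ ∧
    ∫ ω, (∑ d ∈ Finset.range D, X a d ω * X b d ω * g (W0 d ω / Real.sqrt D)
        - (if a = b then (1:ℝ) else 0) * (D * hMean μ g W0 D))^2 ∂μ
      ≤ D * ((c+1) * ((hMean μ g W0 D)^2 + hVar μ g W0 D)) := by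
  have h2nn : 0 ≤ hVar μ g W0 D := variance_nonneg _ _
  set h₁ := hMean μ g W0 D with hh1d
  set h₂ := hVar μ g W0 D with hh2d
  have hx : 0 ≤ h₁^2 + h₂ := add_nonneg (sq_nonneg _) h2nn
  -- measurability and moments of h d
  have hmW : ∀ d : ℕ, Measurable fun x : ℝ => g (x / Real.sqrt D) :=
    fun d => hg.comp (measurable_id.div_const _)
  have hidh : ∀ d, IdentDistrib (fun ω => g (W0 d ω / Real.sqrt D))
      (fun ω => g (W0 0 ω / Real.sqrt D)) μ μ := fun d => (hW0ident d).comp (hmW d)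
  have hL2h : ∀ d, MemLp (fun ω => g (W0 d ω / Real.sqrt D)) 2 μ :=
    fun d => (hidh d).memLp_iff.mpr hgL2D
  have hInth : ∀ d, Integrable (fun ω => g (W0 d ω / Real.sqrt D)) μ :=
    fun d => (hL2h d).integrable one_le_two
  have hEh : ∀ d, ∫ ω, g (W0 d ω / Real.sqrt D) ∂μ = h₁ := fun d => (hidh d).integral_eq
  have hhhInt : ∀ d d', Integrable (fun ω => g (W0 d ω / Real.sqrt D) * g (W0 d' ω / Real.sqrt D)) μ :=
    fun d d' => int_mul μ _ _ (hL2h d') (hL2h d)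
  have hEh2 : ∫ ω, g (W0 0 ω / Real.sqrt D) * g (W0 0 ω / Real.sqrt D) ∂μ = h₁^2 + h₂ := by
    have hv : h₂ = (∫ ω, (g (W0 0 ω / Real.sqrt D))^2 ∂μ) - h₁^2 := by
      rw [hh2d, hh1d]
      simpa [hVar, hMean, Pi.pow_apply] using variance_eq_sub hgL2D
    have hmul : ∫ ω, g (W0 0 ω / Real.sqrt D) * g (W0 0 ω / Real.sqrt D) ∂μ
        = ∫ ω, (g (W0 0 ω / Real.sqrt D))^2 ∂μ :=
      integral_congr_ae (Eventually.of_forall fun ω => (sq _).symm)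
    rw [hmul]; linarith
  have hEhh : ∀ d d', ∫ ω, g (W0 d ω / Real.sqrt D) * g (W0 d' ω / Real.sqrt D) ∂μ
      = if d = d' then h₁^2 + h₂ else h₁^2 := by
    intro d d'
    by_cases hdd : d = d'
    · subst hdd
      rw [if_pos rfl]
      have hid2 : IdentDistrib (fun ω => g (W0 d ω / Real.sqrt D) * g (W0 d ω / Real.sqrt D))
          (fun ω => g (W0 0 ω / Real.sqrt D) * g (W0 0 ω / Real.sqrt D)) μ μ :=
        (hW0ident d).comp ((hmW d).mul (hmW d))
      rw [hid2.integral_eq, hEh2]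
    · rw [if_neg hdd]
      have hind : IndepFun (fun ω => g (W0 d ω / Real.sqrt D))
          (fun ω => g (W0 d' ω / Real.sqrt D)) μ :=
        (hW0indep.indepFun hdd).comp (hmW d) (hmW d')
      have h' : ∫ ω, g (W0 d ω / Real.sqrt D) * g (W0 d' ω / Real.sqrt D) ∂μ
          = (∫ ω, g (W0 d ω / Real.sqrt D) ∂μ) * ∫ ω, g (W0 d' ω / Real.sqrt D) ∂μ :=
        hind.integral_fun_mul_eq_mul_integral (hInth d).aestronglyMeasurable
            (hInth d').aestronglyMeasurable
      rw [h', hEh d, hEh d', sq]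
  -- X moments
  have hL2pair : ∀ (u v d e : ℕ), MemLp (fun ω => X u d ω * X v e ω) 2 μ :=
    fun u v d e => memL2_mul μ _ _ (hXL4 v e) (hXL4 u d)
  have hIntpair : ∀ u v d e, Integrable (fun ω => X u d ω * X v e ω) μ :=
    fun u v d e => (hL2pair u v d e).integrable one_le_two
  have hIntquad : ∀ u v d e, Integrable (fun ω => (X u d ω * X v d ω) * (X u e ω * X v e ω)) μ :=
    fun u v d e => int_mul μ _ _ (hL2pair u v e e) (hL2pair u v d d)
  have hEpair : ∀ d, ∫ ω, X a d ω * X b d ω ∂μ = if a = b then (1:ℝ) else 0 := by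
    intro d
    by_cases hab : a = b
    · subst hab
      rw [if_pos rfl]
      rw [show (fun ω => X a d ω * X a d ω) = fun ω => (X a d ω)^2 from
        funext fun ω => (sq _).symm]
      exact hXvar a d
    · rw [if_neg hab]
      have hind : IndepFun (X a d) (X b d) μ :=
        (hXindep.indepFun hab).comp (measurable_pi_apply d) (measurable_pi_apply d)
      have h' : ∫ ω, X a d ω * X b d ω ∂μ = (∫ ω, X a d ω ∂μ) * ∫ ω, X b d ω ∂μ :=
        hind.integral_fun_mul_eq_mul_integral ((hXL4 a d).integrable (by norm_num)).aestronglyMeasurable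
          ((hXL4 b d).integrable (by norm_num)).aestronglyMeasurable
      rw [h', hXmean a d, zero_mul]
  have hEquad : ∀ d d', ∫ ω, (X a d ω * X b d ω) * (X a d' ω * X b d' ω) ∂μ
      = if a = b then (∫ ω, (X 0 d ω)^2 * (X 0 d' ω)^2 ∂μ)
        else (∫ ω, X 0 d ω * X 0 d' ω ∂μ)^2 := by
    intro d d'
    by_cases hab : a = b
    · subst hab
      rw [if_pos rfl]
      have h1 : (fun ω => (X a d ω * X a d ω) * (X a d' ω * X a d' ω))
          = fun ω => (X a d ω)^2 * (X a d' ω)^2 := funext fun ω => by ring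
      rw [h1]
      exact ((hXident a).comp (((measurable_pi_apply d).pow_const 2).mul
        ((measurable_pi_apply d').pow_const 2))).integral_eq
    · rw [if_neg hab]
      have hind : IndepFun (fun ω => X a d ω * X a d' ω) (fun ω => X b d ω * X b d' ω) μ :=
        (hXindep.indepFun hab).comp ((measurable_pi_apply d).mul (measurable_pi_apply d'))
          ((measurable_pi_apply d).mul (measurable_pi_apply d'))
      have hma : ∫ ω, X a d ω * X a d' ω ∂μ = ∫ ω, X 0 d ω * X 0 d' ω ∂μ :=
        ((hXident a).comp ((measurable_pi_apply d).mul (measurable_pi_apply d'))).integral_eq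
      have hmb : ∫ ω, X b d ω * X b d' ω ∂μ = ∫ ω, X 0 d ω * X 0 d' ω ∂μ :=
        ((hXident b).comp ((measurable_pi_apply d).mul (measurable_pi_apply d'))).integral_eq
      calc ∫ ω, (X a d ω * X b d ω) * (X a d' ω * X b d' ω) ∂μ
          = ∫ ω, (X a d ω * X a d' ω) * (X b d ω * X b d' ω) ∂μ :=
            integral_congr_ae (Eventually.of_forall fun ω => by ring)
        _ = (∫ ω, X a d ω * X a d' ω ∂μ) * (∫ ω, X b d ω * X b d' ω ∂μ) :=
            hind.integral_fun_mul_eq_mul_integral (hIntpair a a d d').aestronglyMeasurable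
                (hIntpair b b d d').aestronglyMeasurable
        _ = (∫ ω, X 0 d ω * X 0 d' ω ∂μ)^2 := by rw [hma, hmb, sq]
  -- per-pair product with the h factors
  have hterm : ∀ d d' : ℕ,
      Integrable (fun ω => (X a d ω * X b d ω * g (W0 d ω / Real.sqrt D))
        * (X a d' ω * X b d' ω * g (W0 d' ω / Real.sqrt D))) μ ∧
      ∫ ω, (X a d ω * X b d ω * g (W0 d ω / Real.sqrt D))
        * (X a d' ω * X b d' ω * g (W0 d' ω / Real.sqrt D)) ∂μ
        = (∫ ω, (X a d ω * X b d ω) * (X a d' ω * X b d' ω) ∂μ)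
          * (∫ ω, g (W0 d ω / Real.sqrt D) * g (W0 d' ω / Real.sqrt D) ∂μ) := by
    intro d d'
    have hpa : ∀ p : ℕ × ℕ, Measurable (fun v : ℕ × ℕ → ℝ => v p) :=
      fun p => measurable_pi_apply p
    have hFmeas : Measurable (fun v : ℕ × ℕ → ℝ => v (a,d) * v (b,d) * (v (a,d') * v (b,d'))) :=
      ((hpa (a,d)).mul (hpa (b,d))).mul ((hpa (a,d')).mul (hpa (b,d')))
    have hGmeas : Measurable (fun w : ℕ → ℝ => g (w d / Real.sqrt D) * g (w d' / Real.sqrt D)) :=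
      (hg.comp ((measurable_pi_apply d).div_const _)).mul
        (hg.comp ((measurable_pi_apply d').div_const _))
    have hXWf := XW_factor μ X W0 hW0X _ _ hFmeas hGmeas (hIntquad a b d d') (hhhInt d d')
    constructor
    · refine hXWf.1.congr (Eventually.of_forall fun ω => ?_)
      show (X a d ω * X b d ω * (X a d' ω * X b d' ω))
          * (g (W0 d ω / Real.sqrt D) * g (W0 d' ω / Real.sqrt D))
        = (X a d ω * X b d ω * g (W0 d ω / Real.sqrt D))
          * (X a d' ω * X b d' ω * g (W0 d' ω / Real.sqrt D))
      ring
    · calc ∫ ω, (X a d ω * X b d ω * g (W0 d ω / Real.sqrt D))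
            * (X a d' ω * X b d' ω * g (W0 d' ω / Real.sqrt D)) ∂μ
          = ∫ ω, (X a d ω * X b d ω * (X a d' ω * X b d' ω))
            * (g (W0 d ω / Real.sqrt D) * g (W0 d' ω / Real.sqrt D)) ∂μ :=
            integral_congr_ae (Eventually.of_forall fun ω => by ring)
        _ = (∫ ω, (X a d ω * X b d ω) * (X a d' ω * X b d' ω) ∂μ)
            * (∫ ω, g (W0 d ω / Real.sqrt D) * g (W0 d' ω / Real.sqrt D) ∂μ) := hXWf.2
  -- single-term integrability and mean
  have hYint : ∀ d : ℕ, Integrable (fun ω => X a d ω * X b d ω * g (W0 d ω / Real.sqrt D)) μ :=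
    fun d => int_mul μ _ _ (hL2h d) (hL2pair a b d d)
  have hY1 : ∀ d : ℕ, ∫ ω, X a d ω * X b d ω * g (W0 d ω / Real.sqrt D) ∂μ
      = (if a = b then (1:ℝ) else 0) * h₁ := by
    intro d
    have hpa : ∀ p : ℕ × ℕ, Measurable (fun v : ℕ × ℕ → ℝ => v p) :=
      fun p => measurable_pi_apply p
    have hFmeas : Measurable (fun v : ℕ × ℕ → ℝ => v (a,d) * v (b,d)) :=
      (hpa (a,d)).mul (hpa (b,d))
    have hGmeas : Measurable (fun w : ℕ → ℝ => g (w d / Real.sqrt D)) :=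
      hg.comp ((measurable_pi_apply d).div_const _)
    have hXWf := XW_factor μ X W0 hW0X _ _ hFmeas hGmeas (hIntpair a b d d) (hInth d)
    rw [hXWf.2, hEpair d, hEh d]
  -- sums
  have hSint : Integrable (fun ω => ∑ d ∈ Finset.range D,
      X a d ω * X b d ω * g (W0 d ω / Real.sqrt D)) μ :=
    integrable_finset_sum _ fun d _ => hYint d
  have hES : ∫ ω, ∑ d ∈ Finset.range D, X a d ω * X b d ω * g (W0 d ω / Real.sqrt D) ∂μ
      = (if a = b then (1:ℝ) else 0) * ((D:ℝ) * h₁) := by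
    rw [integral_finset_sum _ fun d _ => hYint d,
      Finset.sum_congr rfl (fun d _ => hY1 d), Finset.sum_const, Finset.card_range,
      nsmul_eq_mul]
    ring
  have hsqrw : (fun ω => (∑ d ∈ Finset.range D, X a d ω * X b d ω * g (W0 d ω / Real.sqrt D))^2)
      = fun ω => ∑ d ∈ Finset.range D, ∑ d' ∈ Finset.range D,
        (X a d ω * X b d ω * g (W0 d ω / Real.sqrt D))
          * (X a d' ω * X b d' ω * g (W0 d' ω / Real.sqrt D)) := by
    funext ω; rw [sq, Finset.sum_mul_sum]
  have hS2int : Integrable (fun ω => (∑ d ∈ Finset.range D,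
      X a d ω * X b d ω * g (W0 d ω / Real.sqrt D))^2) μ := by
    rw [hsqrw]
    exact integrable_finset_sum _ fun d _ => integrable_finset_sum _ fun d' _ => (hterm d d').1
  have hS2val : ∫ ω, (∑ d ∈ Finset.range D, X a d ω * X b d ω * g (W0 d ω / Real.sqrt D))^2 ∂μ
      = ∑ d ∈ Finset.range D, ∑ d' ∈ Finset.range D,
        (if a = b then (∫ ω, (X 0 d ω)^2 * (X 0 d' ω)^2 ∂μ)
          else (∫ ω, X 0 d ω * X 0 d' ω ∂μ)^2) * (if d = d' then h₁^2 + h₂ else h₁^2) := by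
    rw [hsqrw, integral_finset_sum _ (fun d _ => integrable_finset_sum _ fun d' _ => (hterm d d').1)]
    refine Finset.sum_congr rfl fun d _ => ?_
    rw [integral_finset_sum _ (fun d' _ => (hterm d d').1)]
    exact Finset.sum_congr rfl fun d' _ => by rw [(hterm d d').2, hEquad d d', hEhh d d']
  have hvrw : (fun ω => (∑ d ∈ Finset.range D, X a d ω * X b d ω * g (W0 d ω / Real.sqrt D)
        - (if a = b then (1:ℝ) else 0) * ((D:ℝ) * h₁))^2)
      = fun ω => (∑ d ∈ Finset.range D, X a d ω * X b d ω * g (W0 d ω / Real.sqrt D))^2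
          - (2 * ((if a = b then (1:ℝ) else 0) * ((D:ℝ) * h₁)))
            * (∑ d ∈ Finset.range D, X a d ω * X b d ω * g (W0 d ω / Real.sqrt D))
          + ((if a = b then (1:ℝ) else 0) * ((D:ℝ) * h₁))^2 := funext fun ω => by ring
  have hvint : Integrable (fun ω => (∑ d ∈ Finset.range D,
      X a d ω * X b d ω * g (W0 d ω / Real.sqrt D)
        - (if a = b then (1:ℝ) else 0) * ((D:ℝ) * h₁))^2) μ := by
    rw [hvrw]
    exact (hS2int.sub (hSint.const_mul _)).add (integrable_const _)
  refine ⟨hvint, ?_⟩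
  have hvval : ∫ ω, (∑ d ∈ Finset.range D, X a d ω * X b d ω * g (W0 d ω / Real.sqrt D)
        - (if a = b then (1:ℝ) else 0) * ((D:ℝ) * h₁))^2 ∂μ
      = (∫ ω, (∑ d ∈ Finset.range D, X a d ω * X b d ω * g (W0 d ω / Real.sqrt D))^2 ∂μ)
        - ((if a = b then (1:ℝ) else 0) * ((D:ℝ) * h₁))^2 := by
    have i1 : Integrable (fun ω => (∑ d ∈ Finset.range D,
        X a d ω * X b d ω * g (W0 d ω / Real.sqrt D))^2
        - (2 * ((if a = b then (1:ℝ) else 0) * ((D:ℝ) * h₁)))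
          * ∑ d ∈ Finset.range D, X a d ω * X b d ω * g (W0 d ω / Real.sqrt D)) μ :=
      hS2int.sub (hSint.const_mul _)
    have e1 : ∫ ω, ((∑ d ∈ Finset.range D, X a d ω * X b d ω * g (W0 d ω / Real.sqrt D))^2
          - (2 * ((if a = b then (1:ℝ) else 0) * ((D:ℝ) * h₁)))
            * (∑ d ∈ Finset.range D, X a d ω * X b d ω * g (W0 d ω / Real.sqrt D))
          + ((if a = b then (1:ℝ) else 0) * ((D:ℝ) * h₁))^2) ∂μ
        = (∫ ω, ((∑ d ∈ Finset.range D, X a d ω * X b d ω * g (W0 d ω / Real.sqrt D))^2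
          - (2 * ((if a = b then (1:ℝ) else 0) * ((D:ℝ) * h₁)))
            * (∑ d ∈ Finset.range D, X a d ω * X b d ω * g (W0 d ω / Real.sqrt D))) ∂μ)
          + ∫ _ω, (((if a = b then (1:ℝ) else 0) * ((D:ℝ) * h₁))^2) ∂μ :=
      integral_add i1 (integrable_const _)
    have e2 : ∫ ω, ((∑ d ∈ Finset.range D, X a d ω * X b d ω * g (W0 d ω / Real.sqrt D))^2
          - (2 * ((if a = b then (1:ℝ) else 0) * ((D:ℝ) * h₁)))
            * (∑ d ∈ Finset.range D, X a d ω * X b d ω * g (W0 d ω / Real.sqrt D))) ∂μ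
        = (∫ ω, (∑ d ∈ Finset.range D, X a d ω * X b d ω * g (W0 d ω / Real.sqrt D))^2 ∂μ)
          - ∫ ω, (2 * ((if a = b then (1:ℝ) else 0) * ((D:ℝ) * h₁)))
            * (∑ d ∈ Finset.range D, X a d ω * X b d ω * g (W0 d ω / Real.sqrt D)) ∂μ :=
      integral_sub hS2int (hSint.const_mul _)
    have e3 : ∫ ω, (2 * ((if a = b then (1:ℝ) else 0) * ((D:ℝ) * h₁)))
          * (∑ d ∈ Finset.range D, X a d ω * X b d ω * g (W0 d ω / Real.sqrt D)) ∂μ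
        = (2 * ((if a = b then (1:ℝ) else 0) * ((D:ℝ) * h₁)))
          * ∫ ω, ∑ d ∈ Finset.range D, X a d ω * X b d ω * g (W0 d ω / Real.sqrt D) ∂μ :=
      integral_const_mul _ _
    have e4 : ∫ _ω, (((if a = b then (1:ℝ) else 0) * ((D:ℝ) * h₁))^2) ∂μ
        = ((if a = b then (1:ℝ) else 0) * ((D:ℝ) * h₁))^2 := by simp
    rw [hvrw, e1, e2, e3, e4, hES]
    ring
  rw [hvval, hS2val]
  by_cases hab : a = b
  · subst hab
    simp only [eq_self_iff_true, if_true, one_mul]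
    have hperd : ∀ d : ℕ, ∑ d' ∈ Finset.range D,
        ((∫ ω, (X 0 d ω)^2 * (X 0 d' ω)^2 ∂μ) * (if d = d' then h₁^2 + h₂ else h₁^2) - h₁^2)
          ≤ c*(h₁^2+h₂) + h₂ := by
      intro d
      have heq : (fun d' => |∫ ω, (X 0 d ω) ^ 2 * (X 0 d' ω) ^ 2 ∂μ -
          (∫ ω, (X 0 d ω) ^ 2 ∂μ) * ∫ ω, (X 0 d' ω) ^ 2 ∂μ|)
          = fun d' => |(∫ ω, (X 0 d ω)^2 * (X 0 d' ω)^2 ∂μ) - 1| :=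
        funext fun d' => by rw [hXvar 0 d, hXvar 0 d', one_mul]
      have hsumle : ∑ d' ∈ Finset.range D, |(∫ ω, (X 0 d ω)^2 * (X 0 d' ω)^2 ∂μ) - 1| ≤ c := by
        refine le_trans (Summable.sum_le_tsum _ (fun i _ => abs_nonneg _) (heq ▸ hsum2 d)) ?_
        exact heq ▸ hcorr2 d
      have hite : ∑ d' ∈ Finset.range D, (if d = d' then h₂ else 0) ≤ h₂ := by
        rw [Finset.sum_ite_eq]
        split_ifs
        exacts [le_rfl, h2nn]
      calc ∑ d' ∈ Finset.range D,
            ((∫ ω, (X 0 d ω)^2 * (X 0 d' ω)^2 ∂μ) * (if d = d' then h₁^2 + h₂ else h₁^2) - h₁^2)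
          ≤ ∑ d' ∈ Finset.range D, (|(∫ ω, (X 0 d ω)^2 * (X 0 d' ω)^2 ∂μ) - 1| * (h₁^2 + h₂)
              + (if d = d' then h₂ else 0)) := by
            refine Finset.sum_le_sum fun d' _ => ?_
            have hkey := mul_le_mul_of_nonneg_right
              (le_abs_self ((∫ ω, (X 0 d ω)^2 * (X 0 d' ω)^2 ∂μ) - 1)) hx
            split_ifs with hdd
            · nlinarith [hkey]
            · have h2' : |(∫ ω, (X 0 d ω)^2 * (X 0 d' ω)^2 ∂μ) - 1| * h₁^2
                  ≤ |(∫ ω, (X 0 d ω)^2 * (X 0 d' ω)^2 ∂μ) - 1| * (h₁^2+h₂) :=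
                mul_le_mul_of_nonneg_left (by linarith) (abs_nonneg _)
              nlinarith [h2', mul_le_mul_of_nonneg_right
                (le_abs_self ((∫ ω, (X 0 d ω)^2 * (X 0 d' ω)^2 ∂μ) - 1)) (sq_nonneg h₁)]
        _ = (∑ d' ∈ Finset.range D, |(∫ ω, (X 0 d ω)^2 * (X 0 d' ω)^2 ∂μ) - 1|) * (h₁^2+h₂)
              + ∑ d' ∈ Finset.range D, (if d = d' then h₂ else 0) := by
            rw [Finset.sum_add_distrib, ← Finset.sum_mul]
        _ ≤ c*(h₁^2+h₂) + h₂ := add_le_add (mul_le_mul_of_nonneg_right hsumle hx) hite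
    have hsplit : ∑ d ∈ Finset.range D, ∑ d' ∈ Finset.range D,
        ((∫ ω, (X 0 d ω)^2 * (X 0 d' ω)^2 ∂μ) * (if d = d' then h₁^2 + h₂ else h₁^2) - h₁^2)
        = (∑ d ∈ Finset.range D, ∑ d' ∈ Finset.range D,
            (∫ ω, (X 0 d ω)^2 * (X 0 d' ω)^2 ∂μ) * (if d = d' then h₁^2 + h₂ else h₁^2))
          - ((D:ℝ) * h₁)^2 := by
      simp only [Finset.sum_sub_distrib, Finset.sum_const, Finset.card_range, nsmul_eq_mul]
      ring
    calc (∑ d ∈ Finset.range D, ∑ d' ∈ Finset.range D,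
            (∫ ω, (X 0 d ω)^2 * (X 0 d' ω)^2 ∂μ) * (if d = d' then h₁^2 + h₂ else h₁^2))
          - ((D:ℝ) * h₁)^2
        = ∑ d ∈ Finset.range D, ∑ d' ∈ Finset.range D,
            ((∫ ω, (X 0 d ω)^2 * (X 0 d' ω)^2 ∂μ) * (if d = d' then h₁^2 + h₂ else h₁^2) - h₁^2) :=
          hsplit.symm
      _ ≤ ∑ d ∈ Finset.range D, (c*(h₁^2+h₂) + h₂) := Finset.sum_le_sum fun d _ => hperd d
      _ = (D:ℝ) * (c*(h₁^2+h₂) + h₂) := by rw [Finset.sum_const, Finset.card_range, nsmul_eq_mul]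
      _ ≤ (D:ℝ) * ((c+1) * (h₁^2 + h₂)) := by
          refine mul_le_mul_of_nonneg_left (by nlinarith [sq_nonneg h₁]) (Nat.cast_nonneg D)
  · simp only [if_neg hab, zero_mul, mul_zero]
    have hperd : ∀ d : ℕ, ∑ d' ∈ Finset.range D,
        (∫ ω, X 0 d ω * X 0 d' ω ∂μ)^2 * (if d = d' then h₁^2 + h₂ else h₁^2)
          ≤ c*(h₁^2+h₂) := by
      intro d
      have hsumle : ∑ d' ∈ Finset.range D, (∫ ω, X 0 d ω * X 0 d' ω ∂μ)^2 ≤ c :=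
        le_trans (Summable.sum_le_tsum _ (fun i _ => sq_nonneg _) (hsum1 d)) (hcorr1 d)
      calc ∑ d' ∈ Finset.range D,
            (∫ ω, X 0 d ω * X 0 d' ω ∂μ)^2 * (if d = d' then h₁^2 + h₂ else h₁^2)
          ≤ ∑ d' ∈ Finset.range D, (∫ ω, X 0 d ω * X 0 d' ω ∂μ)^2 * (h₁^2+h₂) := by
            refine Finset.sum_le_sum fun d' _ => ?_
            refine mul_le_mul_of_nonneg_left ?_ (sq_nonneg _)
            split_ifs
            · exact le_rfl
            · linarith
        _ = (∑ d' ∈ Finset.range D, (∫ ω, X 0 d ω * X 0 d' ω ∂μ)^2) * (h₁^2+h₂) :=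
            (Finset.sum_mul _ _ _).symm
        _ ≤ c*(h₁^2+h₂) := mul_le_mul_of_nonneg_right hsumle hx
    calc (∑ d ∈ Finset.range D, ∑ d' ∈ Finset.range D,
            (∫ ω, X 0 d ω * X 0 d' ω ∂μ)^2 * (if d = d' then h₁^2 + h₂ else h₁^2)) - 0^2
        = ∑ d ∈ Finset.range D, ∑ d' ∈ Finset.range D,
            (∫ ω, X 0 d ω * X 0 d' ω ∂μ)^2 * (if d = d' then h₁^2 + h₂ else h₁^2) := by ring
      _ ≤ ∑ d ∈ Finset.range D, (c*(h₁^2+h₂)) := Finset.sum_le_sum fun d _ => hperd d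
      _ = (D:ℝ) * (c*(h₁^2+h₂)) := by rw [Finset.sum_const, Finset.card_range, nsmul_eq_mul]
      _ ≤ (D:ℝ) * ((c+1) * (h₁^2 + h₂)) := by
          refine mul_le_mul_of_nonneg_left (by nlinarith) (Nat.cast_nonneg D)

end AuxLemmas

/-- Lemma 1 of the paper: with probability at least `1 − p`, the inverse of the scaled Gram
matrix `A = (1/(D h₁(D))) X^D H^D (X^D)ᵀ` is close to the identity in operator norm. -/
theorem scaledGram_inv_close_to_identity
    (μ : Measure Ω) [IsProbabilityMeasure μ]
    (X : ℕ → ℕ → Ω → ℝ)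
    (hXmeas : ∀ i d, Measurable (X i d))
    (hXindep : iIndepFun (fun i ω d => X i d ω) μ)
    (hXident : ∀ i, IdentDistrib (fun ω d => X i d ω) (fun ω d => X 0 d ω) μ μ)
    (hXmean : ∀ i d, ∫ ω, X i d ω ∂μ = 0)
    (hXvar : ∀ i d, ∫ ω, (X i d ω) ^ 2 ∂μ = 1)
    (hXL4 : ∀ i d, MemLp (X i d) 4 μ)
    (W0 : ℕ → Ω → ℝ) (hW0meas : ∀ d, Measurable (W0 d))
    (hW0indep : iIndepFun W0 μ)
    (hW0ident : ∀ d, IdentDistrib (W0 d) (W0 0) μ μ)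
    (hW0X : IndepFun (fun ω d => W0 d ω) (fun ω (q : ℕ × ℕ) => X q.1 q.2 ω) μ)
    (c : ℝ)
    (hsum1 : ∀ d, Summable fun d' => (∫ ω, X 0 d ω * X 0 d' ω ∂μ) ^ 2)
    (hcorr1 : ∀ d, (∑' d' : ℕ, (∫ ω, X 0 d ω * X 0 d' ω ∂μ) ^ 2) ≤ c)
    (hsum2 : ∀ d, Summable fun d' => |∫ ω, (X 0 d ω) ^ 2 * (X 0 d' ω) ^ 2 ∂μ -
      (∫ ω, (X 0 d ω) ^ 2 ∂μ) * ∫ ω, (X 0 d' ω) ^ 2 ∂μ|)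
    (hcorr2 : ∀ d, (∑' d' : ℕ, |∫ ω, (X 0 d ω) ^ 2 * (X 0 d' ω) ^ 2 ∂μ -
      (∫ ω, (X 0 d ω) ^ 2 ∂μ) * ∫ ω, (X 0 d' ω) ^ 2 ∂μ|) ≤ c)
    (g : ℝ → ℝ) (hg : Measurable g)
    (hgL2 : ∀ D : ℕ, MemLp (fun ω => g (W0 0 ω / Real.sqrt D)) 2 μ)
    (hh1pos : ∀ D : ℕ, 0 < D → 0 < hMean μ g W0 D)
    (hgpos : ∀ x : ℝ, 0 < g x)
    (N D : ℕ) (hN : 0 < N) (hD : 0 < D)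
    (hinv : ∀ᵐ ω ∂μ, IsUnit (inputMatrix X N D ω * hessMatrix g W0 D ω *
      (inputMatrix X N D ω)ᵀ))
    (p : ℝ) (hp : p ∈ Set.Ioo (0 : ℝ) 1)
    (bound : ℝ)
    (hbound : bound = 8 * Real.sqrt (((N : ℝ) ^ 4 / D) * ((c + 1) / p) *
      (1 + hVar μ g W0 D / (hMean μ g W0 D) ^ 2)))
    (hlarge : bound ≤ 4) :
    ENNReal.ofReal (1 - p) ≤
      μ {ω | matOpNorm ((scaledGram μ X g W0 N D ω)⁻¹ - 1) ≤ bound} := by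
  obtain ⟨hp0, hp1⟩ := hp
  have hDR : (0:ℝ) < D := by exact_mod_cast hD
  have h1pos : 0 < hMean μ g W0 D := hh1pos D hD
  have h2nn : 0 ≤ hVar μ g W0 D := variance_nonneg _ _
  have hDh1ne : ((D:ℝ) * hMean μ g W0 D) ≠ 0 := ne_of_gt (mul_pos hDR h1pos)
  have hc1 : (1:ℝ) ≤ c := by
    have hle := Summable.le_tsum (hsum1 0) 0 (fun b' _ => sq_nonneg _)
    have h00 : ∫ ω, X 0 0 ω * X 0 0 ω ∂μ = 1 := by
      rw [show (fun ω => X 0 0 ω * X 0 0 ω) = fun ω => (X 0 0 ω)^2 from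
        funext fun ω => (sq _).symm]
      exact hXvar 0 0
    rw [h00] at hle
    simpa using hle.trans (hcorr1 0)
  have key := fun (a b : ℕ) => entry_moment μ X hXmeas hXindep hXident hXmean hXvar hXL4 W0
      hW0meas hW0indep hW0ident hW0X c hsum1 hcorr1 hsum2 hcorr2 g hg D (hgL2 D) a b
  set t : ℝ := ((N : ℝ) ^ 4 / D) * ((c + 1) / p) *
      (1 + hVar μ g W0 D / (hMean μ g W0 D) ^ 2) with htdef
  have hNR : (1:ℝ) ≤ (N:ℝ) := by exact_mod_cast hN
  have htpos : 0 < t := by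
    refine mul_pos (mul_pos (div_pos (pow_pos (by linarith) 4) hDR)
      (div_pos (by linarith) hp0)) ?_
    have hnn : 0 ≤ hVar μ g W0 D / (hMean μ g W0 D)^2 := div_nonneg h2nn (sq_nonneg _)
    linarith
  have hbt : bound = 8 * Real.sqrt t := by rw [hbound, htdef]
  set F : Ω → ℝ := fun ω => ∑ i : Fin N, ∑ j : Fin N,
      (((D:ℝ) * hMean μ g W0 D)⁻¹ *
        (∑ d ∈ Finset.range D, X i d ω * X j d ω * g (W0 d ω / Real.sqrt D))
        - (if (i:ℕ) = (j:ℕ) then (1:ℝ) else 0))^2 with hFdef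
  have hGsq : ∀ (a b : ℕ) (ω : Ω),
      (((D:ℝ) * hMean μ g W0 D)⁻¹ *
        (∑ d ∈ Finset.range D, X a d ω * X b d ω * g (W0 d ω / Real.sqrt D))
        - (if a = b then (1:ℝ) else 0))^2
      = (((D:ℝ) * hMean μ g W0 D)⁻¹)^2 *
        ((∑ d ∈ Finset.range D, X a d ω * X b d ω * g (W0 d ω / Real.sqrt D))
          - (if a = b then (1:ℝ) else 0) * ((D:ℝ) * hMean μ g W0 D))^2 := by
    intro a b ω
    rw [← mul_pow]
    congr 1
    field_simp
  have hentryInt : ∀ a b : ℕ, Integrable (fun ω =>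
      (((D:ℝ) * hMean μ g W0 D)⁻¹ *
        (∑ d ∈ Finset.range D, X a d ω * X b d ω * g (W0 d ω / Real.sqrt D))
        - (if a = b then (1:ℝ) else 0))^2) μ := by
    intro a b
    rw [show (fun ω => (((D:ℝ) * hMean μ g W0 D)⁻¹ *
        (∑ d ∈ Finset.range D, X a d ω * X b d ω * g (W0 d ω / Real.sqrt D))
        - (if a = b then (1:ℝ) else 0))^2)
      = fun ω => (((D:ℝ) * hMean μ g W0 D)⁻¹)^2 *
        ((∑ d ∈ Finset.range D, X a d ω * X b d ω * g (W0 d ω / Real.sqrt D))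
          - (if a = b then (1:ℝ) else 0) * ((D:ℝ) * hMean μ g W0 D))^2 from
      funext fun ω => hGsq a b ω]
    exact ((key a b).1).const_mul _
  have hB := (((D:ℝ) * hMean μ g W0 D)⁻¹)^2 *
      ((D:ℝ) * ((c+1) * ((hMean μ g W0 D)^2 + hVar μ g W0 D)))
  have hentryVal : ∀ a b : ℕ, ∫ ω, (((D:ℝ) * hMean μ g W0 D)⁻¹ *
        (∑ d ∈ Finset.range D, X a d ω * X b d ω * g (W0 d ω / Real.sqrt D))
        - (if a = b then (1:ℝ) else 0))^2 ∂μ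
      ≤ (((D:ℝ) * hMean μ g W0 D)⁻¹)^2 *
        ((D:ℝ) * ((c+1) * ((hMean μ g W0 D)^2 + hVar μ g W0 D))) := by
    intro a b
    rw [show (fun ω => (((D:ℝ) * hMean μ g W0 D)⁻¹ *
        (∑ d ∈ Finset.range D, X a d ω * X b d ω * g (W0 d ω / Real.sqrt D))
        - (if a = b then (1:ℝ) else 0))^2)
      = fun ω => (((D:ℝ) * hMean μ g W0 D)⁻¹)^2 *
        ((∑ d ∈ Finset.range D, X a d ω * X b d ω * g (W0 d ω / Real.sqrt D))
          - (if a = b then (1:ℝ) else 0) * ((D:ℝ) * hMean μ g W0 D))^2 from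
      funext fun ω => hGsq a b ω]
    rw [integral_const_mul]
    exact mul_le_mul_of_nonneg_left (key a b).2 (sq_nonneg _)
  have hFint : Integrable F μ := by
    rw [hFdef]
    exact integrable_finset_sum _ fun i _ => integrable_finset_sum _ fun j _ => hentryInt i j
  have hFnn : ∀ ω, 0 ≤ F ω := fun ω =>
    Finset.sum_nonneg fun i _ => Finset.sum_nonneg fun j _ => sq_nonneg _
  have hEF : ∫ ω, F ω ∂μ ≤ (N:ℝ)^2 * ((((D:ℝ) * hMean μ g W0 D)⁻¹)^2 *
      ((D:ℝ) * ((c+1) * ((hMean μ g W0 D)^2 + hVar μ g W0 D)))) := by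
    have e0 : ∫ ω, F ω ∂μ = ∑ i : Fin N, ∫ ω, ∑ j : Fin N,
        (((D:ℝ) * hMean μ g W0 D)⁻¹ *
          (∑ d ∈ Finset.range D, X i d ω * X j d ω * g (W0 d ω / Real.sqrt D))
          - (if (i:ℕ) = (j:ℕ) then (1:ℝ) else 0))^2 ∂μ :=
      integral_finset_sum _ fun i _ => integrable_finset_sum _ fun j _ => hentryInt i j
    rw [e0]
    calc ∑ i : Fin N, ∫ ω, ∑ j : Fin N,
          (((D:ℝ) * hMean μ g W0 D)⁻¹ *
            (∑ d ∈ Finset.range D, X i d ω * X j d ω * g (W0 d ω / Real.sqrt D))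
            - (if (i:ℕ) = (j:ℕ) then (1:ℝ) else 0))^2 ∂μ
        = ∑ i : Fin N, ∑ j : Fin N, ∫ ω,
          (((D:ℝ) * hMean μ g W0 D)⁻¹ *
            (∑ d ∈ Finset.range D, X i d ω * X j d ω * g (W0 d ω / Real.sqrt D))
            - (if (i:ℕ) = (j:ℕ) then (1:ℝ) else 0))^2 ∂μ :=
          Finset.sum_congr rfl fun i _ =>
            integral_finset_sum _ fun j _ => hentryInt i j
      _ ≤ ∑ _i : Fin N, ∑ _j : Fin N, (((D:ℝ) * hMean μ g W0 D)⁻¹)^2 *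
            ((D:ℝ) * ((c+1) * ((hMean μ g W0 D)^2 + hVar μ g W0 D))) :=
          Finset.sum_le_sum fun i _ => Finset.sum_le_sum fun j _ => hentryVal i j
      _ = (N:ℝ)^2 * ((((D:ℝ) * hMean μ g W0 D)⁻¹)^2 *
            ((D:ℝ) * ((c+1) * ((hMean μ g W0 D)^2 + hVar μ g W0 D)))) := by
          simp [Finset.sum_const, Finset.card_univ, nsmul_eq_mul]
          ring
  have hptB : (N:ℝ)^2 * ((((D:ℝ) * hMean μ g W0 D)⁻¹)^2 *
      ((D:ℝ) * ((c+1) * ((hMean μ g W0 D)^2 + hVar μ g W0 D)))) ≤ p * t := by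
    have hN24 : (N:ℝ)^2 ≤ (N:ℝ)^4 := pow_le_pow_right₀ hNR (by norm_num)
    have hBnn : (0:ℝ) ≤ (((D:ℝ) * hMean μ g W0 D)⁻¹)^2 *
        ((D:ℝ) * ((c+1) * ((hMean μ g W0 D)^2 + hVar μ g W0 D))) := by
      have : (0:ℝ) ≤ (c+1) * ((hMean μ g W0 D)^2 + hVar μ g W0 D) := by
        apply mul_nonneg (by linarith) (by positivity)
      positivity
    calc (N:ℝ)^2 * _ ≤ (N:ℝ)^4 * ((((D:ℝ) * hMean μ g W0 D)⁻¹)^2 *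
          ((D:ℝ) * ((c+1) * ((hMean μ g W0 D)^2 + hVar μ g W0 D)))) :=
        mul_le_mul_of_nonneg_right hN24 hBnn
      _ = p * t := by
        rw [htdef]
        have hne1 : hMean μ g W0 D ≠ 0 := ne_of_gt h1pos
        have hne2 : (D:ℝ) ≠ 0 := ne_of_gt hDR
        have hne3 : p ≠ 0 := ne_of_gt hp0
        field_simp
  have hm := mul_meas_ge_le_integral_of_nonneg (ae_of_all μ hFnn) hFint t
  have htR : (μ {ω | t ≤ F ω}).toReal ≤ p := by
    have h' : t * (μ {ω | t ≤ F ω}).toReal ≤ t * p := by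
      calc t * (μ {ω | t ≤ F ω}).toReal ≤ ∫ ω, F ω ∂μ := hm
        _ ≤ (N:ℝ)^2 * ((((D:ℝ) * hMean μ g W0 D)⁻¹)^2 *
            ((D:ℝ) * ((c+1) * ((hMean μ g W0 D)^2 + hVar μ g W0 D)))) := hEF
        _ ≤ p * t := hptB
        _ = t * p := mul_comm _ _
    exact le_of_mul_le_mul_left h' htpos
  have hμle : μ {ω | t ≤ F ω} ≤ ENNReal.ofReal p := by
    rw [← ENNReal.ofReal_toReal (measure_ne_top μ _)]
    exact ENNReal.ofReal_le_ofReal htR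
  have hFmeas : Measurable F := by
    rw [hFdef]
    refine Finset.measurable_sum _ fun i _ => Finset.measurable_sum _ fun j _ => ?_
    refine Measurable.pow_const (Measurable.sub ?_ measurable_const) 2
    refine Measurable.const_mul ?_ _
    refine Finset.measurable_sum _ fun d _ => ?_
    exact ((hXmeas i d).mul (hXmeas j d)).mul (hg.comp ((hW0meas d).div_const _))
  have hsetm : MeasurableSet {ω | t ≤ F ω} := measurableSet_le measurable_const hFmeas
  have hsubset : {ω | t ≤ F ω}ᶜ ⊆
      {ω | matOpNorm ((scaledGram μ X g W0 N D ω)⁻¹ - 1) ≤ bound} := by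
    intro ω hω
    simp only [Set.mem_compl_iff, Set.mem_setOf_eq, not_le] at hω
    have hentry : ∀ i j : Fin N, (scaledGram μ X g W0 N D ω - 1) i j
        = ((D:ℝ) * hMean μ g W0 D)⁻¹ *
          (∑ d ∈ Finset.range D, X i d ω * X j d ω * g (W0 d ω / Real.sqrt D))
          - (if (i:ℕ) = (j:ℕ) then (1:ℝ) else 0) := by
      intro i j
      have hprod : (inputMatrix X N D ω * hessMatrix g W0 D ω * (inputMatrix X N D ω)ᵀ) i j
          = ∑ d ∈ Finset.range D, X i d ω * X j d ω * g (W0 d ω / Real.sqrt D) := by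
        calc (inputMatrix X N D ω * hessMatrix g W0 D ω * (inputMatrix X N D ω)ᵀ) i j
            = ∑ k : Fin D, (inputMatrix X N D ω * hessMatrix g W0 D ω) i k *
              (inputMatrix X N D ω)ᵀ k j := Matrix.mul_apply
          _ = ∑ k : Fin D, X (i:ℕ) (k:ℕ) ω * X (j:ℕ) (k:ℕ) ω * g (W0 (k:ℕ) ω / Real.sqrt D) := by
              refine Finset.sum_congr rfl fun k _ => ?_
              show (inputMatrix X N D ω *
                  Matrix.diagonal fun d : Fin D => g (W0 (d:ℕ) ω / Real.sqrt D)) i k *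
                (inputMatrix X N D ω)ᵀ k j = _
              rw [Matrix.mul_diagonal, Matrix.transpose_apply]
              show X (i:ℕ) (k:ℕ) ω * g (W0 (k:ℕ) ω / Real.sqrt D) * X (j:ℕ) (k:ℕ) ω = _
              ring
          _ = ∑ d ∈ Finset.range D, X (i:ℕ) d ω * X (j:ℕ) d ω * g (W0 d ω / Real.sqrt D) :=
              Fin.sum_univ_eq_sum_range
                (fun d => X (i:ℕ) d ω * X (j:ℕ) d ω * g (W0 d ω / Real.sqrt D)) D
      rw [Matrix.sub_apply]
      have h1a : scaledGram μ X g W0 N D ω i j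
          = ((D:ℝ) * hMean μ g W0 D)⁻¹ *
            (∑ d ∈ Finset.range D, X i d ω * X j d ω * g (W0 d ω / Real.sqrt D)) := by
        show (((D:ℝ) * hMean μ g W0 D)⁻¹ •
          (inputMatrix X N D ω * hessMatrix g W0 D ω * (inputMatrix X N D ω)ᵀ)) i j = _
        rw [Matrix.smul_apply, smul_eq_mul, hprod]
      rw [h1a, Matrix.one_apply]
      congr 1
      exact if_congr (Fin.val_eq_val i j).symm rfl rfl
    have hopF : matOpNorm (scaledGram μ X g W0 N D ω - 1) ≤ Real.sqrt (F ω) := by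
      refine le_trans (matOpNorm_le_sqrt _) (le_of_eq ?_)
      congr 1
      rw [hFdef]
      exact Finset.sum_congr rfl fun i _ => Finset.sum_congr rfl fun j _ => by
        rw [hentry i j]
    have h8 : Real.sqrt t = bound / 8 := by rw [hbt]; ring
    have hsq : Real.sqrt (F ω) ≤ bound / 8 := by
      calc Real.sqrt (F ω) ≤ Real.sqrt t := Real.sqrt_le_sqrt hω.le
        _ = bound / 8 := h8
    have hb2 : bound / 8 ≤ 1/2 := by linarith
    have hclose := matrix_inv_close (scaledGram μ X g W0 N D ω) (bound/8) hb2
      (hopF.trans hsq)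
    have hbnn : 0 ≤ bound := by rw [hbt]; positivity
    simp only [Set.mem_setOf_eq]
    linarith
  have hstep1 : ENNReal.ofReal (1 - p) = 1 - ENNReal.ofReal p := by
    rw [ENNReal.ofReal_sub _ hp0.le, ENNReal.ofReal_one]
  calc ENNReal.ofReal (1 - p) = 1 - ENNReal.ofReal p := hstep1
    _ ≤ 1 - μ {ω | t ≤ F ω} := tsub_le_tsub_left hμle 1
    _ = μ ({ω | t ≤ F ω}ᶜ) := (prob_compl_eq_one_sub hsetm).symm
    _ ≤ μ {ω | matOpNorm ((scaledGram μ X g W0 N D ω)⁻¹ - 1) ≤ bound} :=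
        measure_mono hsubset
end
end

section
/- Under the Setup with weak-correlation constant c, assume h₁(D) > 0 and h₂(D) < ∞. For the diagonal entries A_{ii} = (1/(D·h₁(D)))·Σ_{d=1}^D (X^i_d)²·h_{dd} of the matrix A = (1/(D·h₁(D)))·X^D H^D (X^D)ᵀ, one has E[A_{ii}] = 1 and Var(A_{ii}) ≤ ((c+1)/D)·(1 + h₂(D)/h₁(D)²). -/
open MeasureTheory ProbabilityTheory Filter Matrix
open scoped ENNReal

noncomputable section

variable {Ω : Type*} [MeasurableSpace Ω]

/-- Product of two `L²` functions is integrable. -/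
lemma integrable_mul_of_memℒp_two {μ : Measure Ω} {f g : Ω → ℝ}
    (hf : MemLp f 2 μ) (hg : MemLp g 2 μ) : Integrable (fun ω => f ω * g ω) μ := by
  have h : (1 : ℝ≥0∞) / 1 = 1 / 2 + 1 / 2 := by
    rw [ENNReal.div_add_div_same, div_one,
      show (1:ℝ≥0∞)+1 = 2 by norm_num, ENNReal.div_self two_ne_zero ENNReal.ofNat_ne_top]
  haveI : ENNReal.HolderTriple 2 2 1 := ⟨by simpa [one_div] using h.symm⟩
  have := hf.smul hg (r := 1)
  rw [memLp_one_iff_integrable] at this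
  simpa [Pi.smul_def, smul_eq_mul, mul_comm, Pi.mul_def] using this

/-- The square of an `L⁴` function is in `L²`. -/
lemma memℒp_two_sq_of_memℒp_four {μ : Measure Ω} {f : Ω → ℝ}
    (hf : MemLp f 4 μ) : MemLp (fun ω => f ω ^ 2) 2 μ := by
  have h : (1 : ℝ≥0∞) / 2 = 1 / 4 + 1 / 4 := by
    rw [ENNReal.div_add_div_same,
      ENNReal.div_eq_div_iff (by norm_num) (by norm_num) two_ne_zero ENNReal.ofNat_ne_top]
    norm_num
  haveI : ENNReal.HolderTriple 4 4 2 := ⟨by simpa [one_div] using h.symm⟩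
  have := hf.smul hf (r := 2)
  simpa [Pi.smul_def, smul_eq_mul, pow_two, Pi.mul_def] using this

/-- The diagonal entries `A_{ii} = (1/(D h₁(D))) Σ_{d<D} (Xⁱ_d)² h_dd` of the scaled Gram
matrix have mean `1` and variance at most `((c+1)/D)(1 + h₂(D)/h₁(D)²)`. -/
theorem scaledGram_diagonal_mean_one_variance_le
    (μ : Measure Ω) [IsProbabilityMeasure μ]
    (X : ℕ → ℕ → Ω → ℝ)
    (hXmeas : ∀ i d, Measurable (X i d))
    (hXindep : iIndepFun (fun i ω d => X i d ω) μ)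
    (hXident : ∀ i, IdentDistrib (fun ω d => X i d ω) (fun ω d => X 0 d ω) μ μ)
    (hXmean : ∀ i d, ∫ ω, X i d ω ∂μ = 0)
    (hXvar : ∀ i d, ∫ ω, (X i d ω) ^ 2 ∂μ = 1)
    (hXL4 : ∀ i d, MemLp (X i d) 4 μ)
    (W0 : ℕ → Ω → ℝ) (hW0meas : ∀ d, Measurable (W0 d))
    (hW0indep : iIndepFun W0 μ)
    (hW0ident : ∀ d, IdentDistrib (W0 d) (W0 0) μ μ)
    (hW0X : IndepFun (fun ω d => W0 d ω) (fun ω (q : ℕ × ℕ) => X q.1 q.2 ω) μ)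
    (c : ℝ)
    (hsum1 : ∀ d, Summable fun d' => (∫ ω, X 0 d ω * X 0 d' ω ∂μ) ^ 2)
    (hcorr1 : ∀ d, (∑' d' : ℕ, (∫ ω, X 0 d ω * X 0 d' ω ∂μ) ^ 2) ≤ c)
    (hsum2 : ∀ d, Summable fun d' => |∫ ω, (X 0 d ω) ^ 2 * (X 0 d' ω) ^ 2 ∂μ -
      (∫ ω, (X 0 d ω) ^ 2 ∂μ) * ∫ ω, (X 0 d' ω) ^ 2 ∂μ|)
    (hcorr2 : ∀ d, (∑' d' : ℕ, |∫ ω, (X 0 d ω) ^ 2 * (X 0 d' ω) ^ 2 ∂μ -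
      (∫ ω, (X 0 d ω) ^ 2 ∂μ) * ∫ ω, (X 0 d' ω) ^ 2 ∂μ|) ≤ c)
    (g : ℝ → ℝ) (hg : Measurable g)
    (hgL2 : ∀ D : ℕ, MemLp (fun ω => g (W0 0 ω / Real.sqrt D)) 2 μ)
    (hh1pos : ∀ D : ℕ, 0 < D → 0 < hMean μ g W0 D)
    (i D : ℕ) (hD : 0 < D)
    (Aii : Ω → ℝ)
    (hAii : Aii = fun ω => ((D : ℝ) * hMean μ g W0 D)⁻¹ *
      ∑ d ∈ Finset.range D, (X i d ω) ^ 2 * g (W0 d ω / Real.sqrt D)) :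
    ∫ ω, Aii ω ∂μ = 1 ∧
    variance Aii μ ≤ ((c + 1) / D) * (1 + hVar μ g W0 D / (hMean μ g W0 D) ^ 2) := by
  set h1 : ℝ := hMean μ g W0 D with hh1def
  set h2 : ℝ := hVar μ g W0 D with hh2def
  have h1pos : 0 < h1 := hh1pos D hD
  have h1ne : h1 ≠ 0 := ne_of_gt h1pos
  have hDpos : (0:ℝ) < (D:ℝ) := by exact_mod_cast hD
  have hDne : (D:ℝ) ≠ 0 := ne_of_gt hDpos
  have h2nonneg : 0 ≤ h2 := variance_nonneg _ _
  set h : ℕ → Ω → ℝ := fun d ω => g (W0 d ω / Real.sqrt D) with hhdef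
  set Y : ℕ → Ω → ℝ := fun d ω => (X i d ω) ^ 2 with hYdef
  set S : Ω → ℝ := fun ω => ∑ d ∈ Finset.range D, Y d ω * h d ω with hSdef
  -- basic measurability
  have hgd : Measurable (fun x : ℝ => g (x / Real.sqrt D)) := hg.comp (measurable_id.div_const _)
  have hhmeas : ∀ d, Measurable (h d) := fun d => hgd.comp (hW0meas d)
  have hYmeas : ∀ d, Measurable (Y d) := fun d => (hXmeas i d).pow_const 2
  -- distributional facts about h
  have hhid : ∀ d, IdentDistrib (h d) (h 0) μ μ := fun d => (hW0ident d).comp hgd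
  have hhL2 : ∀ d, MemLp (h d) 2 μ := fun d => ((hhid d).memLp_iff).2 (hgL2 D)
  have hhint : ∀ d, Integrable (h d) μ := fun d => (hhL2 d).integrable one_le_two
  have hhmean : ∀ d, ∫ ω, h d ω ∂μ = h1 := fun d => (hhid d).integral_eq
  -- distributional facts about Y
  have hYL2 : ∀ d, MemLp (Y d) 2 μ := fun d => memℒp_two_sq_of_memℒp_four (hXL4 i d)
  have hYint : ∀ d, Integrable (Y d) μ := fun d => (hYL2 d).integrable one_le_two
  have hYmean : ∀ d, ∫ ω, Y d ω ∂μ = 1 := fun d => hXvar i d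
  -- independence between the X side and the W side
  have hYYhh : ∀ d d', IndepFun (fun ω => Y d ω * Y d' ω) (fun ω => h d ω * h d' ω) μ := by
    intro d d'
    have hXm : Measurable (fun v : (ℕ × ℕ) → ℝ => (v (i,d))^2 * (v (i,d'))^2) :=
      ((measurable_pi_apply _).pow_const 2).mul ((measurable_pi_apply _).pow_const 2)
    have hWm : Measurable (fun v : ℕ → ℝ => g (v d / Real.sqrt D) * g (v d' / Real.sqrt D)) :=
      (hgd.comp (measurable_pi_apply d)).mul (hgd.comp (measurable_pi_apply d'))
    exact hW0X.symm.comp hXm hWm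
  have hYh : ∀ d d', IndepFun (Y d) (h d') μ := by
    intro d d'
    have hXm : Measurable (fun v : (ℕ × ℕ) → ℝ => (v (i,d))^2) := (measurable_pi_apply _).pow_const 2
    have hWm : Measurable (fun v : ℕ → ℝ => g (v d' / Real.sqrt D)) := hgd.comp (measurable_pi_apply d')
    exact hW0X.symm.comp hXm hWm
  -- integrability and mean of the summands
  have hfint : ∀ d, Integrable (fun ω => Y d ω * h d ω) μ := fun d =>
    (hYh d d).integrable_mul (hYint d) (hhint d)
  have hfmean : ∀ d, ∫ ω, Y d ω * h d ω ∂μ = h1 := by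
    intro d
    have h' : (∫ ω, Y d ω * h d ω ∂μ) = (∫ ω, Y d ω ∂μ) * ∫ ω, h d ω ∂μ :=
      (hYh d d).integral_mul_eq_mul_integral (hYint d).1 (hhint d).1
    rw [h', hYmean d, hhmean d, one_mul]
  have hSmean : ∫ ω, S ω ∂μ = (D:ℝ) * h1 := by
    rw [hSdef]
    rw [integral_finset_sum _ (fun d _ => hfint d)]
    simp [hfmean, Finset.sum_const, Finset.card_range, mul_comm]
  -- second moments
  have hYYint : ∀ d d', Integrable (fun ω => Y d ω * Y d' ω) μ := fun d d' =>
    integrable_mul_of_memℒp_two (hYL2 d) (hYL2 d')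
  have hhhint : ∀ d d', Integrable (fun ω => h d ω * h d' ω) μ := fun d d' =>
    integrable_mul_of_memℒp_two (hhL2 d) (hhL2 d')
  set K : ℕ → ℕ → ℝ := fun d d' => ∫ ω, (X 0 d ω)^2 * (X 0 d' ω)^2 ∂μ with hKdef
  have hK : ∀ d d', ∫ ω, Y d ω * Y d' ω ∂μ = K d d' := by
    intro d d'
    exact ((hXident i).comp (((measurable_pi_apply d).pow_const 2).mul
      ((measurable_pi_apply d').pow_const 2))).integral_eq
  set H : ℕ → ℕ → ℝ := fun d d' => ∫ ω, h d ω * h d' ω ∂μ with hHdef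
  have hHoff : ∀ d d', d ≠ d' → H d d' = h1 * h1 := by
    intro d d' hne
    have hi : IndepFun (h d) (h d') μ := (hW0indep.indepFun hne).comp hgd hgd
    have h' : (∫ ω, h d ω * h d' ω ∂μ) = (∫ ω, h d ω ∂μ) * ∫ ω, h d' ω ∂μ :=
      hi.integral_mul_eq_mul_integral (hhint d).1 (hhint d').1
    rw [hHdef]
    simp only []
    rw [h', hhmean d, hhmean d']
  have hHdiag : ∀ d, H d d = h2 + h1 * h1 := by
    intro d
    have hv : h2 = (∫ ω, h 0 ω * h 0 ω ∂μ) - h1 * h1 := by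
      have hvd := variance_eq_sub (μ := μ) (hgL2 D)
      rw [hh2def, hVar, hvd]
      have : ∫ ω, ((fun ω => g (W0 0 ω / Real.sqrt ↑D)) ^ 2) ω ∂μ
          = ∫ ω, h 0 ω * h 0 ω ∂μ := by
        refine integral_congr_ae (Eventually.of_forall fun ω => ?_)
        simp [hhdef, pow_two]
      rw [show (μ[(fun ω => g (W0 0 ω / Real.sqrt ↑D)) ^ 2]) = ∫ ω, h 0 ω * h 0 ω ∂μ from this]
      have hm : (μ[fun ω => g (W0 0 ω / Real.sqrt ↑D)]) = h1 := hhmean 0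
      rw [hm, pow_two]
    have hid2 : ∫ ω, h d ω * h d ω ∂μ = ∫ ω, h 0 ω * h 0 ω ∂μ :=
      ((hhid d).comp (measurable_id.mul measurable_id)).integral_eq
    rw [hHdef]
    simp only []
    rw [hid2]
    linarith [hv]
  -- rearrangement of products
  have hprodint : ∀ d d', Integrable (fun ω => (Y d ω * h d ω) * (Y d' ω * h d' ω)) μ := by
    intro d d'
    have := (hYYhh d d').integrable_mul (hYYint d d') (hhhint d d')
    exact this.congr (Eventually.of_forall fun ω => by simp only [Pi.mul_apply]; ring)
  have hfprod : ∀ d d', ∫ ω, (Y d ω * h d ω) * (Y d' ω * h d' ω) ∂μ = K d d' * H d d' := by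
    intro d d'
    have heq : ∀ ω, (Y d ω * h d ω) * (Y d' ω * h d' ω)
        = (fun ω => Y d ω * Y d' ω) ω * (fun ω => h d ω * h d' ω) ω := fun ω => by
      simp only []; ring
    rw [integral_congr_ae (Eventually.of_forall heq)]
    have h' : (∫ ω, (fun ω => Y d ω * Y d' ω) ω * (fun ω => h d ω * h d' ω) ω ∂μ)
        = (∫ ω, Y d ω * Y d' ω ∂μ) * ∫ ω, h d ω * h d' ω ∂μ :=
      (hYYhh d d').integral_mul_eq_mul_integral (hYYint d d').1 (hhhint d d').1
    rw [h', hK d d']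
  -- S is in L²
  have hSmeaso : Measurable S := by
    rw [hSdef]; exact Finset.measurable_sum _ fun d _ => (hYmeas d).mul (hhmeas d)
  have hSsq : ∀ ω, S ω ^ 2 = ∑ d ∈ Finset.range D, ∑ d' ∈ Finset.range D,
      (Y d ω * h d ω) * (Y d' ω * h d' ω) := by
    intro ω
    rw [hSdef]
    simp only []
    rw [sq, Finset.sum_mul_sum]
  have hSsqint : Integrable (fun ω => S ω ^ 2) μ := by
    have : (fun ω => S ω ^ 2) = fun ω => ∑ d ∈ Finset.range D, ∑ d' ∈ Finset.range D,
        (Y d ω * h d ω) * (Y d' ω * h d' ω) := funext fun ω => hSsq ω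
    rw [this]
    exact integrable_finset_sum _ fun d _ => integrable_finset_sum _ fun d' _ => hprodint d d'
  have hSL2 : MemLp S 2 μ := (memLp_two_iff_integrable_sq hSmeaso.aestronglyMeasurable).2 hSsqint
  -- variance of S
  have hvarS : variance S μ = ∑ d ∈ Finset.range D, ∑ d' ∈ Finset.range D,
      (K d d' * H d d' - h1 * h1) := by
    rw [variance_eq_sub hSL2]
    have hSsqint' : (μ[S ^ 2]) = ∑ d ∈ Finset.range D, ∑ d' ∈ Finset.range D, K d d' * H d d' := by
      have e1 : (S ^ 2 : Ω → ℝ) = fun ω => ∑ d ∈ Finset.range D, ∑ d' ∈ Finset.range D,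
          (Y d ω * h d ω) * (Y d' ω * h d' ω) := funext fun ω => by
        rw [Pi.pow_apply, hSsq ω]
      rw [e1, integral_finset_sum _ (fun d _ => integrable_finset_sum _ fun d' _ => hprodint d d')]
      refine Finset.sum_congr rfl fun d _ => ?_
      rw [integral_finset_sum _ (fun d' _ => hprodint d d')]
      exact Finset.sum_congr rfl fun d' _ => hfprod d d'
    rw [hSsqint']
    have hSm : (μ[S]) = (D:ℝ) * h1 := hSmean
    rw [hSm]
    rw [Finset.sum_congr rfl fun d _ => Finset.sum_sub_distrib _ _]
    rw [Finset.sum_sub_distrib]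
    simp only [Finset.sum_const, Finset.card_range, nsmul_eq_mul]
    ring
  -- weak correlation bounds
  have habs : ∀ d d', |K d d' - 1| = |∫ ω, (X 0 d ω) ^ 2 * (X 0 d' ω) ^ 2 ∂μ -
      (∫ ω, (X 0 d ω) ^ 2 ∂μ) * ∫ ω, (X 0 d' ω) ^ 2 ∂μ| := by
    intro d d'
    rw [hXvar 0 d, hXvar 0 d', one_mul]
  have hrow : ∀ d, ∑ d' ∈ Finset.range D, |K d d' - 1| ≤ c := by
    intro d
    calc ∑ d' ∈ Finset.range D, |K d d' - 1|
        = ∑ d' ∈ Finset.range D, |∫ ω, (X 0 d ω) ^ 2 * (X 0 d' ω) ^ 2 ∂μ -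
          (∫ ω, (X 0 d ω) ^ 2 ∂μ) * ∫ ω, (X 0 d' ω) ^ 2 ∂μ| :=
          Finset.sum_congr rfl fun d' _ => habs d d'
      _ ≤ ∑' d' : ℕ, |∫ ω, (X 0 d ω) ^ 2 * (X 0 d' ω) ^ 2 ∂μ -
          (∫ ω, (X 0 d ω) ^ 2 ∂μ) * ∫ ω, (X 0 d' ω) ^ 2 ∂μ| :=
          Summable.sum_le_tsum _ (fun _ _ => abs_nonneg _) (hsum2 d)
      _ ≤ c := hcorr2 d
  have hc0 : 0 ≤ c := by
    have := hrow 0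
    have h0 : (0:ℝ) ≤ ∑ d' ∈ Finset.range D, |K 0 d' - 1| :=
      Finset.sum_nonneg fun _ _ => abs_nonneg _
    linarith
  have hdiagK : ∀ d, K d d ≤ c + 1 := by
    intro d
    have h1' : |K d d - 1| ≤ c := by
      rw [habs d d]
      exact (Summable.le_tsum (hsum2 d) d fun _ _ => abs_nonneg _).trans (hcorr2 d)
    have := (abs_le.1 h1').2
    linarith
  -- per-term bound
  have hterm : ∀ d' ∈ Finset.range D, ∀ d, K d d' * H d d' - h1 * h1 ≤
      h1 ^ 2 * |K d d' - 1| + (if d' = d then (c + 1) * h2 else 0) := by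
    intro d' _ d
    by_cases hdd : d' = d
    · subst hdd
      rw [hHdiag d', if_pos rfl]
      have e1 : K d' d' - 1 ≤ |K d' d' - 1| := le_abs_self _
      have e2 : K d' d' ≤ c + 1 := hdiagK d'
      nlinarith [sq_nonneg h1, mul_le_mul_of_nonneg_left e1 (sq_nonneg h1),
        mul_le_mul_of_nonneg_right e2 h2nonneg]
    · rw [hHoff d d' (fun hh => hdd hh.symm), if_neg hdd, add_zero]
      nlinarith [mul_le_mul_of_nonneg_left (le_abs_self (K d d' - 1)) (sq_nonneg h1)]
  have hrowsum : ∀ d ∈ Finset.range D, ∑ d' ∈ Finset.range D, (K d d' * H d d' - h1 * h1) ≤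
      h1 ^ 2 * c + (c + 1) * h2 := by
    intro d hd
    have step1 : ∑ d' ∈ Finset.range D, (K d d' * H d d' - h1 * h1) ≤
        ∑ d' ∈ Finset.range D, (h1 ^ 2 * |K d d' - 1| + (if d' = d then (c + 1) * h2 else 0)) :=
      Finset.sum_le_sum fun d' hd' => hterm d' hd' d
    have step2 : ∑ d' ∈ Finset.range D, (h1 ^ 2 * |K d d' - 1| + (if d' = d then (c + 1) * h2 else 0))
        = h1 ^ 2 * (∑ d' ∈ Finset.range D, |K d d' - 1|) + (c + 1) * h2 := by
      rw [Finset.sum_add_distrib, ← Finset.mul_sum, Finset.sum_ite_eq' (Finset.range D) d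
        (fun _ => (c + 1) * h2), if_pos hd]
    have step3 : h1 ^ 2 * (∑ d' ∈ Finset.range D, |K d d' - 1|) ≤ h1 ^ 2 * c :=
      mul_le_mul_of_nonneg_left (hrow d) (sq_nonneg h1)
    calc ∑ d' ∈ Finset.range D, (K d d' * H d d' - h1 * h1) ≤ _ := step1
      _ = _ := step2
      _ ≤ h1 ^ 2 * c + (c + 1) * h2 := by linarith
  have hvarSle : variance S μ ≤ (D:ℝ) * (h1 ^ 2 * c + (c + 1) * h2) := by
    rw [hvarS]
    calc ∑ d ∈ Finset.range D, ∑ d' ∈ Finset.range D, (K d d' * H d d' - h1 * h1)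
        ≤ ∑ _d ∈ Finset.range D, (h1 ^ 2 * c + (c + 1) * h2) := Finset.sum_le_sum hrowsum
      _ = (D:ℝ) * (h1 ^ 2 * c + (c + 1) * h2) := by
          simp only [Finset.sum_const, Finset.card_range, nsmul_eq_mul]
  -- conclusion
  constructor
  · rw [hAii]
    have : ∫ ω, ((D:ℝ) * h1)⁻¹ * ∑ d ∈ Finset.range D, (X i d ω) ^ 2 * g (W0 d ω / Real.sqrt D) ∂μ
        = ((D:ℝ) * h1)⁻¹ * ∫ ω, S ω ∂μ := by
      rw [integral_const_mul]
    rw [this, hSmean]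
    field_simp
  · have hAvar : variance Aii μ = (((D:ℝ) * h1)⁻¹) ^ 2 * variance S μ := by
      rw [hAii]
      exact variance_const_mul _ S μ
    rw [hAvar]
    have hb : (((D:ℝ) * h1)⁻¹) ^ 2 * variance S μ ≤
        (((D:ℝ) * h1)⁻¹) ^ 2 * ((D:ℝ) * (h1 ^ 2 * c + (c + 1) * h2)) :=
      mul_le_mul_of_nonneg_left hvarSle (sq_nonneg _)
    refine hb.trans ?_
    have key : ((c + 1) / D) * (1 + h2 / h1 ^ 2) -
        (((D:ℝ) * h1)⁻¹) ^ 2 * ((D:ℝ) * (h1 ^ 2 * c + (c + 1) * h2)) = 1 / D := by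
      field_simp
      ring
    have hpos : (0:ℝ) < 1 / D := by positivity
    linarith
end
end
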